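/- In the structural model with normalization Var(U)=1, the structural coefficient β_u satisfies β_u = R_{Y∼U|W_Z,W_Y,Z} · sqrt( Var(Y)/Var(U) · (1 − R²_{Y∼W_Y,W_Z,Z}) / [ (1 − R²_{W_Z∼U|W_Y,Z}) (1 − R²_{U∼W_Y,Z}) ] ). -/

import Mathlib

/-!
Everything happens in the Hilbert space of centred variables, where regression is orthogonal
projection. Since `ε_y` is orthogonal to `U` and to the regressors `W_Z, W_Y, Z`, projecting the
structural equation for `Y` off those regressors leaves `⟪Y^⊥, U^⊥⟫ = β_u ‖U^⊥‖²`
(Frisch–Waugh–Lovell), i.e. `β_u = R_{Y∼U|W_Z,W_Y,Z} · ‖Y^⊥‖ / ‖U^⊥‖`. The two norms are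
rewritten as `‖Y^⊥‖² = Var(Y) (1 − R²_{Y∼W_Y,W_Z,Z})` and, adding `W_Z` to the regressors
`W_Y, Z` of `U`, `‖U^⊥‖² = (1 − R²_{U∼W_Y,Z}) (1 − R²_{W_Z∼U|W_Y,Z})`.
-/

open Submodule RealInnerProductSpace

/-- Residual of `A` after orthogonal projection onto the span of the finite set `S`. -/
noncomputable def resid {H : Type*} [NormedAddCommGroup H] [InnerProductSpace ℝ H]
    [CompleteSpace H] (A : H) (S : Set H) (hS : S.Finite) : H :=
  haveI := hS.to_subtype
  haveI : FiniteDimensional ℝ (span ℝ S) := FiniteDimensional.span_of_finite ℝ hS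
  A - (orthogonalProjection (span ℝ S) A : H)

/-- Correlation of two (mean-zero) random variables modeled as Hilbert-space vectors. -/
noncomputable def corr {H : Type*} [NormedAddCommGroup H] [InnerProductSpace ℝ H]
    (a b : H) : ℝ := ⟪a, b⟫ / (‖a‖ * ‖b‖)

/-- Squared multiple correlation `R²_{A∼S} = 1 − Var(A^{⊥S})/Var(A)`. -/
noncomputable def R2m {H : Type*} [NormedAddCommGroup H] [InnerProductSpace ℝ H]
    [CompleteSpace H] (A : H) (S : Set H) (hS : S.Finite) : ℝ :=
  1 - ⟪resid A S hS, resid A S hS⟫ / ⟪A, A⟫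

section Correlation

variable {H : Type*} [NormedAddCommGroup H] [InnerProductSpace ℝ H]

lemma norm_sq_mul_corr_sq (a b : H) : ‖b‖ ^ 2 * corr a b ^ 2 = ⟪a, b⟫ ^ 2 / ‖a‖ ^ 2 := by
  rcases eq_or_ne b 0 with rfl | hb
  · simp
  · have : ‖b‖ ≠ 0 := norm_ne_zero_iff.2 hb
    rw [corr]
    field_simp

lemma norm_sq_sub_smul_eq_mul_one_sub_corr_sq (a b : H) :
    ‖b - (⟪a, b⟫ / ‖a‖ ^ 2) • a‖ ^ 2 = ‖b‖ ^ 2 * (1 - corr a b ^ 2) := by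
  rw [mul_one_sub, norm_sq_mul_corr_sq, norm_sub_sq_real, real_inner_smul_right, norm_smul,
    Real.norm_eq_abs, mul_pow, sq_abs, real_inner_comm b a]
  rcases eq_or_ne a 0 with rfl | ha
  · simp
  · have : ‖a‖ ≠ 0 := norm_ne_zero_iff.2 ha
    field_simp
    ring

lemma corr_mul_norm_div_norm (a : H) {b : H} (hb : b ≠ 0) :
    corr a b * (‖a‖ / ‖b‖) = ⟪a, b⟫ / ‖b‖ ^ 2 := by
  rcases eq_or_ne a 0 with rfl | ha
  · simp
  · have : ‖a‖ ≠ 0 := norm_ne_zero_iff.2 ha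
    have : ‖b‖ ≠ 0 := norm_ne_zero_iff.2 hb
    rw [corr]
    field_simp

end Correlation

section Residuals

variable {H : Type*} [NormedAddCommGroup H] [InnerProductSpace ℝ H] [CompleteSpace H]

lemma sub_resid_mem_span (A : H) (S : Set H) (hS : S.Finite) :
    A - resid A S hS ∈ span ℝ S := by
  have := hS.to_subtype
  have : FiniteDimensional ℝ (span ℝ S) := FiniteDimensional.span_of_finite ℝ hS
  simp [resid]

lemma resid_mem_orthogonal (A : H) (S : Set H) (hS : S.Finite) :
    resid A S hS ∈ (span ℝ S)ᗮ := by
  have := hS.to_subtype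
  have : FiniteDimensional ℝ (span ℝ S) := FiniteDimensional.span_of_finite ℝ hS
  exact sub_starProjection_mem_orthogonal A

lemma resid_eq_of_sub_mem_of_mem_orthogonal {A r : H} {S : Set H} (hS : S.Finite)
    (hsub : A - r ∈ span ℝ S) (horth : r ∈ (span ℝ S)ᗮ) : resid A S hS = r := by
  have := hS.to_subtype
  have : FiniteDimensional ℝ (span ℝ S) := FiniteDimensional.span_of_finite ℝ hS
  have : (span ℝ S).starProjection A = A - r :=
    eq_starProjection_of_mem_of_inner_eq_zero hsub fun w hw ↦ by
      simpa using (mem_orthogonal' _ _).1 horth w hw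
  simp [resid, this]

lemma inner_resid_left (A B : H) (S : Set H) (hS : S.Finite) :
    ⟪resid A S hS, B⟫ = ⟪resid A S hS, resid B S hS⟫ := by
  have hzero : ⟪resid A S hS, B - resid B S hS⟫ = 0 :=
    (mem_orthogonal' _ _).1 (resid_mem_orthogonal A S hS) _ (sub_resid_mem_span B S hS)
  rw [inner_sub_right, sub_eq_zero] at hzero
  exact hzero

-- Frisch–Waugh–Lovell.
lemma inner_resid_resid_eq_mul_of_sub_mem_span {Y U ε : H} {S : Set H} (hS : S.Finite) (β : ℝ)
    (hY : Y - β • U - ε ∈ span ℝ S) (hεS : ε ∈ (span ℝ S)ᗮ) (hεU : ⟪ε, U⟫ = 0) :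
    ⟪resid Y S hS, resid U S hS⟫ = β * ‖resid U S hS‖ ^ 2 := by
  have hε : ⟪ε, resid U S hS⟫ = 0 := by
    have h := (mem_orthogonal' _ _).1 hεS _ (sub_resid_mem_span U S hS)
    rwa [inner_sub_right, hεU, zero_sub, neg_eq_zero] at h
  have hx : ⟪Y - β • U - ε, resid U S hS⟫ = 0 :=
    (mem_orthogonal _ _).1 (resid_mem_orthogonal U S hS) _ hY
  have hYU : ⟪Y, resid U S hS⟫ = ⟪resid Y S hS, resid U S hS⟫ := by
    rw [real_inner_comm, inner_resid_left, real_inner_comm]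
  have hUU : ⟪U, resid U S hS⟫ = ‖resid U S hS‖ ^ 2 := by
    rw [real_inner_comm, inner_resid_left, real_inner_self_eq_norm_sq]
  rw [inner_sub_left, inner_sub_left, real_inner_smul_left, hε, hYU, hUU] at hx
  linear_combination hx

-- When `w ∈ span T` the coefficient is `0 / 0 = 0`, and the formula still holds.
lemma resid_insert (u w : H) (T : Set H) (hT : T.Finite) :
    resid u (insert w T) (hT.insert w) = resid u T hT -
      (⟪resid w T hT, resid u T hT⟫ / ‖resid w T hT‖ ^ 2) • resid w T hT := by
  set ru := resid u T hT
  set rw := resid w T hT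
  set c := ⟪rw, ru⟫ / ‖rw‖ ^ 2
  have hle : span ℝ T ≤ span ℝ (insert w T) := span_mono (Set.subset_insert w T)
  apply resid_eq_of_sub_mem_of_mem_orthogonal
  · have hrw : rw ∈ span ℝ (insert w T) :=
      sub_sub_cancel w rw ▸ sub_mem (subset_span (Set.mem_insert w T))
        (hle (sub_resid_mem_span w T hT))
    rw [sub_sub_eq_add_sub, add_sub_right_comm]
    exact add_mem (hle (sub_resid_mem_span u T hT)) (smul_mem _ c hrw)
  · have hperp : ru - c • rw ∈ (span ℝ T)ᗮ :=
      sub_mem (resid_mem_orthogonal u T hT) (smul_mem _ c (resid_mem_orthogonal w T hT))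
    have hw : ⟪w - rw, ru - c • rw⟫ = 0 :=
      (mem_orthogonal _ _).1 hperp _ (sub_resid_mem_span w T hT)
    have hrw : ⟪rw, ru - c • rw⟫ = 0 := by
      rcases eq_or_ne rw 0 with h0 | h0
      · simp [h0]
      · rw [inner_sub_right, real_inner_smul_right, real_inner_self_eq_norm_sq]
        have : ‖rw‖ ≠ 0 := norm_ne_zero_iff.2 h0
        simp only [c]
        field_simp
        ring
    rw [span_insert, ← inf_orthogonal]
    refine ⟨mem_orthogonal_singleton_iff_inner_right.2 ?_, hperp⟩
    rw [← sub_add_cancel w rw, inner_add_left, hw, hrw, add_zero]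

lemma norm_sq_resid_insert (u w : H) (T : Set H) (hT : T.Finite) :
    ‖resid u (insert w T) (hT.insert w)‖ ^ 2 =
      ‖resid u T hT‖ ^ 2 * (1 - corr (resid w T hT) (resid u T hT) ^ 2) := by
  rw [resid_insert, norm_sq_sub_smul_eq_mul_one_sub_corr_sq]

lemma inner_self_mul_one_sub_R2m (A : H) (S : Set H) (hS : S.Finite) :
    ⟪A, A⟫ * (1 - R2m A S hS) = ‖resid A S hS‖ ^ 2 := by
  rcases eq_or_ne A 0 with rfl | hA
  · simp [resid]
  · have : ⟪A, A⟫ ≠ 0 := inner_self_ne_zero.2 hA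
    rw [R2m, real_inner_self_eq_norm_sq (resid A S hS)]
    field_simp
    ring

end Residuals

theorem stmt_11_general {H : Type*} [NormedAddCommGroup H] [InnerProductSpace ℝ H] [CompleteSpace H]
    (Y Z WZ WY U εy εz εwy εwz : H)
    (τ βu βwy βwz γu γwy γwz αu αwz φu : ℝ)
    (hY : Y = βu • U + βwy • WY + βwz • WZ + τ • Z + εy)
    (hZ : Z = γu • U + γwy • WY + γwz • WZ + εz)
    (hWY : WY = αu • U + αwz • WZ + εwy)
    (hWZ : WZ = φu • U + εwz)
    (horth : ∀ i j : Fin 5, i ≠ j →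
      ⟪(![εy, εz, εwy, εwz, U]) i, (![εy, εz, εwy, εwz, U]) j⟫ = 0)
    (hU1 : ⟪U, U⟫ = 1)
    (hvU : resid U {WZ, WY, Z} (Set.toFinite _) ≠ 0) :
    βu = corr (resid Y {WZ, WY, Z} (Set.toFinite _)) (resid U {WZ, WY, Z} (Set.toFinite _)) *
      Real.sqrt ((⟪Y, Y⟫ / ⟪U, U⟫) * (1 - R2m Y {WY, WZ, Z} (Set.toFinite _)) /
        ((1 - (corr (resid WZ {WY, Z} (Set.toFinite _))
                 (resid U {WY, Z} (Set.toFinite _)))^2) *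
         (1 - R2m U {WY, Z} (Set.toFinite _)))) := by
  have hperp : ∀ i, i ≠ 0 → ![εy, εz, εwy, εwz, U] i ∈ (ℝ ∙ εy)ᗮ := fun i hi ↦
    mem_orthogonal_singleton_iff_inner_left.2 (horth i 0 hi)
  have hWZ_perp : WZ ∈ (ℝ ∙ εy)ᗮ := hWZ ▸ add_mem (smul_mem _ _ (hperp 4 (by decide)))
    (hperp 3 (by decide))
  have hWY_perp : WY ∈ (ℝ ∙ εy)ᗮ := hWY ▸ add_mem (add_mem (smul_mem _ _ (hperp 4 (by decide)))
    (smul_mem _ _ hWZ_perp)) (hperp 2 (by decide))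
  have hZ_perp : Z ∈ (ℝ ∙ εy)ᗮ := hZ ▸ add_mem (add_mem (add_mem
    (smul_mem _ _ (hperp 4 (by decide))) (smul_mem _ _ hWY_perp)) (smul_mem _ _ hWZ_perp))
    (hperp 1 (by decide))
  have hεy : εy ∈ (span ℝ {WZ, WY, Z})ᗮ :=
    isOrtho_iff_le.1 (isOrtho_iff_le.2 (span_le.2 (Set.insert_subset_iff.2
      ⟨hWZ_perp, Set.insert_subset_iff.2 ⟨hWY_perp, Set.singleton_subset_iff.2 hZ_perp⟩⟩))).symm
      (mem_span_singleton_self εy)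
  have hreg : Y - βu • U - εy ∈ span ℝ {WZ, WY, Z} := by
    rw [show Y - βu • U - εy = βwy • WY + βwz • WZ + τ • Z by rw [hY]; abel]
    exact add_mem (add_mem (smul_mem _ _ (subset_span (by simp)))
      (smul_mem _ _ (subset_span (by simp)))) (smul_mem _ _ (subset_span (by simp)))
  have hβ : ⟪resid Y {WZ, WY, Z} (Set.toFinite _), resid U {WZ, WY, Z} (Set.toFinite _)⟫ =
      βu * ‖resid U {WZ, WY, Z} (Set.toFinite _)‖ ^ 2 :=
    inner_resid_resid_eq_mul_of_sub_mem_span _ βu hreg hεy (horth 0 4 (by decide))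
  have hR2U : 1 - R2m U {WY, Z} (Set.toFinite _) = ‖resid U {WY, Z} (Set.toFinite _)‖ ^ 2 := by
    rw [← inner_self_mul_one_sub_R2m, hU1, one_mul]
  rw [hU1, div_one, inner_self_mul_one_sub_R2m, hR2U, mul_comm (1 - _), ← norm_sq_resid_insert]
  simp only [Set.insert_comm WY WZ]
  rw [← div_pow, Real.sqrt_sq (by positivity), corr_mul_norm_div_norm _ hvU, hβ]
  field_simp

/-- Equation (beta_u_r2) in the proof of Theorem 2: in the structural model with
`Var(U) = 1`, the structural coefficient `β_u` satisfies
`β_u = R_{Y∼U|W_Z,W_Y,Z} · √( Var(Y)/Var(U) · (1 − R²_{Y∼W_Y,W_Z,Z}) /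
  [(1 − R²_{W_Z∼U|W_Y,Z})(1 − R²_{U∼W_Y,Z})] )`. -/
theorem stmt_11 {H : Type*} [NormedAddCommGroup H] [InnerProductSpace ℝ H] [CompleteSpace H]
    (Y Z WZ WY U εy εz εwy εwz : H)
    (τ βu βwy βwz γu γwy γwz αu αwz φu : ℝ)
    (hY : Y = βu • U + βwy • WY + βwz • WZ + τ • Z + εy)
    (hZ : Z = γu • U + γwy • WY + γwz • WZ + εz)
    (hWY : WY = αu • U + αwz • WZ + εwy)
    (hWZ : WZ = φu • U + εwz)
    (horth : ∀ i j : Fin 5, i ≠ j →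
      ⟪(![εy, εz, εwy, εwz, U]) i, (![εy, εz, εwy, εwz, U]) j⟫ = 0)
    (hpos : ∀ i : Fin 5, 0 < ⟪(![εy, εz, εwy, εwz, U]) i, (![εy, εz, εwy, εwz, U]) i⟫)
    (hU1 : ⟪U, U⟫ = 1)
    (hvY : resid Y {WZ, WY, Z} (Set.toFinite _) ≠ 0)
    (hvU : resid U {WZ, WY, Z} (Set.toFinite _) ≠ 0)
    (hd1 : 0 < 1 - (corr (resid WZ {WY, Z} (Set.toFinite _))
                      (resid U {WY, Z} (Set.toFinite _)))^2)
    (hd2 : 0 < 1 - R2m U {WY, Z} (Set.toFinite _))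
    (hvarY : 0 < ⟪Y, Y⟫) :
    βu = corr (resid Y {WZ, WY, Z} (Set.toFinite _)) (resid U {WZ, WY, Z} (Set.toFinite _)) *
      Real.sqrt ((⟪Y, Y⟫ / ⟪U, U⟫) * (1 - R2m Y {WY, WZ, Z} (Set.toFinite _)) /
        ((1 - (corr (resid WZ {WY, Z} (Set.toFinite _))
                 (resid U {WY, Z} (Set.toFinite _)))^2) *
         (1 - R2m U {WY, Z} (Set.toFinite _)))) :=
  stmt_11_general Y Z WZ WY U εy εz εwy εwz τ βu βwy βwz γu γwy γwz αu αwz φu hY hZ hWY hWZ horth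
    hU1 hvU
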